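/- Let M be a matroid on a finite set E with rank function r and let F_1, …, F_m ⊆ E. If I ⊆ E is such that for every σ ⊆ {1,…,m} the set I ∩ (F_σ⁻ ∖ F_σ⁺) is independent in the contraction M/F_σ⁺, then for each i ∈ {1,…,m} the set I ∩ F_i is independent in M|F_i and the set I ∖ F_i is independent in M/F_i. -/

import Mathlib

open Finset

/-- A (finite) matroid on a finite ground set `E`, given by a submodular rank function,
following the matroid rank axioms (R1)-(R3). -/
structure FinMatroid (α : Type*) [DecidableEq α] where
  E : Finset α
  r : Finset α → ℕ
  r_le_card : ∀ ⦃A : Finset α⦄, A ⊆ E → r A ≤ A.card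
  r_mono : ∀ ⦃A B : Finset α⦄, A ⊆ B → B ⊆ E → r A ≤ r B
  r_submod : ∀ ⦃A B : Finset α⦄, A ⊆ E → B ⊆ E → r (A ∪ B) + r (A ∩ B) ≤ r A + r B

namespace FinMatroid

variable {α : Type*} [DecidableEq α]

/-- A set is independent if it is a subset of the ground set whose rank is its cardinality. -/
def Indep (M : FinMatroid α) (A : Finset α) : Prop :=
  A ⊆ M.E ∧ M.r A = A.card

/-- A base is a maximal independent set. -/
def Base (M : FinMatroid α) (B : Finset α) : Prop :=
  M.Indep B ∧ ∀ ⦃A : Finset α⦄, M.Indep A → B ⊆ A → A = B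

/-- A basis of `A` is a maximal independent subset of `A`. -/
def BasisOf (M : FinMatroid α) (I A : Finset α) : Prop :=
  I ⊆ A ∧ M.Indep I ∧ ∀ ⦃J : Finset α⦄, J ⊆ A → M.Indep J → I ⊆ J → J = I

/-- A flat is a set `F` with `F = {s ∈ E : r (F ∪ {s}) = r F}`. -/
def Flat (M : FinMatroid α) (F : Finset α) : Prop :=
  F = M.E.filter (fun s => M.r (F ∪ {s}) = M.r F)

/-- A matroid is loopless if every singleton of the ground set has rank one. -/
def Loopless (M : FinMatroid α) : Prop :=
  ∀ s ∈ M.E, M.r {s} = 1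

/-- The restriction `M|A` of `M` to `A`. -/
def restrict (M : FinMatroid α) (A : Finset α) : FinMatroid α where
  E := A ∩ M.E
  r := M.r
  r_le_card := fun _ h => M.r_le_card (h.trans inter_subset_right)
  r_mono := fun _ _ h h' => M.r_mono h (h'.trans inter_subset_right)
  r_submod := fun _ _ h h' =>
    M.r_submod (h.trans inter_subset_right) (h'.trans inter_subset_right)

/-- The contraction `M/C` of `C` in `M`, with rank function `A ↦ r (A ∪ C) - r C`. -/
def contract (M : FinMatroid α) (C : Finset α) : FinMatroid α where
  E := M.E \ C
  r := fun A => M.r (A ∪ C ∩ M.E) - M.r (C ∩ M.E)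
  r_le_card := by
    intro A hA
    have hAE : A ⊆ M.E := hA.trans sdiff_subset
    have hc : C ∩ M.E ⊆ M.E := inter_subset_right
    have h1 := M.r_submod hAE hc
    have h2 := M.r_le_card hAE
    beta_reduce
    omega
  r_mono := by
    intro A B hAB hB
    have hBE : B ⊆ M.E := hB.trans sdiff_subset
    have hc : C ∩ M.E ⊆ M.E := inter_subset_right
    have h1 : M.r (A ∪ C ∩ M.E) ≤ M.r (B ∪ C ∩ M.E) :=
      M.r_mono (union_subset_union hAB (Finset.Subset.refl _)) (union_subset hBE hc)
    beta_reduce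
    omega
  r_submod := by
    intro A B hA hB
    have hAE : A ⊆ M.E := hA.trans sdiff_subset
    have hBE : B ⊆ M.E := hB.trans sdiff_subset
    have hc : C ∩ M.E ⊆ M.E := inter_subset_right
    have hAc : A ∪ C ∩ M.E ⊆ M.E := union_subset hAE hc
    have hBc : B ∪ C ∩ M.E ⊆ M.E := union_subset hBE hc
    have h1 := M.r_submod hAc hBc
    have e1 : (A ∪ C ∩ M.E) ∪ (B ∪ C ∩ M.E) = (A ∪ B) ∪ C ∩ M.E := by
      ext x; simp only [Finset.mem_union, Finset.mem_inter]; tauto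
    have e2 : (A ∪ C ∩ M.E) ∩ (B ∪ C ∩ M.E) = (A ∩ B) ∪ C ∩ M.E := by
      ext x; simp only [Finset.mem_union, Finset.mem_inter]; tauto
    rw [e1, e2] at h1
    have hABc : (A ∩ B) ∪ C ∩ M.E ⊆ M.E := union_subset (inter_subset_left.trans hAE) hc
    have hABc' : (A ∪ B) ∪ C ∩ M.E ⊆ M.E := union_subset (union_subset hAE hBE) hc
    have h2 : M.r (C ∩ M.E) ≤ M.r ((A ∩ B) ∪ C ∩ M.E) := M.r_mono subset_union_right hABc
    have h3 : M.r (C ∩ M.E) ≤ M.r (A ∪ C ∩ M.E) := M.r_mono subset_union_right hAc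
    have h4 : M.r (C ∩ M.E) ≤ M.r (B ∪ C ∩ M.E) := M.r_mono subset_union_right hBc
    have h5 : M.r (C ∩ M.E) ≤ M.r ((A ∪ B) ∪ C ∩ M.E) := M.r_mono subset_union_right hABc'
    beta_reduce
    omega

/-- `A` is a separator of `M` if `r A + r (E \ A) = r E`. -/
def Separator (M : FinMatroid α) (A : Finset α) : Prop :=
  A ⊆ M.E ∧ M.r A + M.r (M.E \ A) = M.r M.E

/-- `M` is connected (inseparable) if its ground set is nonempty and its only
separators are `∅` and `E`. -/
def Connected (M : FinMatroid α) : Prop :=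
  M.E.Nonempty ∧ ∀ A : Finset α, M.Separator A → A = ∅ ∨ A = M.E

/-- For connected `M`, a set `∅ ≠ F ⊊ E` is non-degenerate if both `M|F` and `M/F`
are connected. -/
def Nondegenerate (M : FinMatroid α) (F : Finset α) : Prop :=
  F ≠ ∅ ∧ F ⊂ M.E ∧ (M.restrict F).Connected ∧ (M.contract F).Connected

end FinMatroid

noncomputable section

open FinMatroid

/-- The indicator (incidence) vector `1^A ∈ ℝ^α` of a finite set `A`. -/
def indicatorVec {α : Type*} [DecidableEq α] (A : Finset α) : α → ℝ :=
  fun i => if i ∈ A then 1 else 0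

/-- The base polytope of a matroid: the convex hull of the indicator vectors of its bases. -/
def basePolytope {α : Type*} [DecidableEq α] (M : FinMatroid α) : Set (α → ℝ) :=
  convexHull ℝ {x | ∃ B : Finset α, M.Base B ∧ x = indicatorVec B}

/-- `Q` is a face of `P`: either `∅`, or `P` itself, or the subset of `P` where some
linear functional attains its maximum over `P` (an exposed face). -/
def IsFaceOf {α : Type*} (P Q : Set (α → ℝ)) : Prop :=
  Q = ∅ ∨ Q = P ∨ ∃ ℓ : (α → ℝ) →ₗ[ℝ] ℝ, Q = {x ∈ P | ∀ y ∈ P, ℓ y ≤ ℓ x}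

/-- The dimension of a convex set: the dimension of the direction of its affine span. -/
def sdim {α : Type*} (Q : Set (α → ℝ)) : ℕ :=
  Module.finrank ℝ (affineSpan ℝ Q).direction

end

/-- `F_σ⁺ := ⋃_{i ∈ σ} F i`. -/
def Fplus {α : Type*} [DecidableEq α] {m : ℕ} (F : Fin m → Finset α) (σ : Finset (Fin m)) :
    Finset α :=
  σ.sup F

/-- `F_σ⁻ := ⋂_{j ∉ σ} F j`, with the empty intersection equal to the ground set `E`. -/
def Fminus {α : Type*} [DecidableEq α] {m : ℕ} (M : FinMatroid α) (F : Fin m → Finset α)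
    (σ : Finset (Fin m)) : Finset α :=
  M.E.filter (fun x => ∀ j, j ∉ σ → x ∈ F j)

/-!
Fix `σ ⊆ T` and write `C = F_σ⁺`. By induction on `T \ σ`, the set `I ∩ (F_T⁻ \ C)` is
independent in `M / C`: for `j ∈ T \ σ` it splits into the part inside `F j`, which is
`I ∩ (F_{T - j}⁻ \ C)`, and the part outside, which is `I ∩ (F_T⁻ \ F_{σ + j}⁺)`; the first is
independent in `M / C`, the second in `M / (F j ∪ C)`, and independence in a contraction is
additive along such a chain. Taking `T` to be everything and `σ = ∅` or `σ = {i}` shows that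
`I` is independent and `I \ F i` is independent in `M / F i`.
-/

namespace FinMatroid

variable {α : Type*} [DecidableEq α] {M : FinMatroid α}

theorem r_empty (M : FinMatroid α) : M.r ∅ = 0 := by
  simpa using M.r_le_card (empty_subset M.E)

theorem r_union_le_card_add {A C : Finset α} (hA : A ⊆ M.E) (hC : C ⊆ M.E) :
    M.r (A ∪ C) ≤ A.card + M.r C := by
  have := M.r_submod hA hC
  have := M.r_le_card hA
  omega

theorem Indep.subset {I J : Finset α} (hI : M.Indep I) (hJI : J ⊆ I) : M.Indep J := by
  refine ⟨hJI.trans hI.1, le_antisymm (M.r_le_card (hJI.trans hI.1)) ?_⟩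
  have h := r_union_le_card_add (sdiff_subset.trans hI.1 : I \ J ⊆ M.E) (hJI.trans hI.1)
  rw [sdiff_union_of_subset hJI, hI.2] at h
  have := card_sdiff_add_card_eq_card hJI
  omega

theorem Indep.restrict_inter {I : Finset α} (hI : M.Indep I) (F : Finset α) :
    (M.restrict F).Indep (I ∩ F) :=
  ⟨fun _ hx => mem_inter.2 ⟨(mem_inter.1 hx).2, hI.1 (mem_inter.1 hx).1⟩,
    (hI.subset inter_subset_left).2⟩

theorem contract_indep_iff {A C : Finset α} (hC : C ⊆ M.E) :
    (M.contract C).Indep A ↔ A ⊆ M.E \ C ∧ M.r (A ∪ C) = A.card + M.r C := by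
  simp only [Indep, contract, inter_eq_left.2 hC]
  refine and_congr_right fun hA => ?_
  have := M.r_mono (subset_union_right : C ⊆ A ∪ C) (union_subset (hA.trans sdiff_subset) hC)
  omega

theorem contract_empty_indep_iff {A : Finset α} : (M.contract ∅).Indep A ↔ M.Indep A := by
  rw [contract_indep_iff (empty_subset M.E), sdiff_empty, union_empty, r_empty, add_zero]
  rfl

theorem Indep.contract_of_subset {A C C' : Finset α} (hA : (M.contract C').Indep A)
    (hCC' : C ⊆ C') (hC' : C' ⊆ M.E) : (M.contract C).Indep A := by
  obtain ⟨hAE, hr⟩ := (contract_indep_iff hC').1 hA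
  have hAC' : Disjoint A C' := (subset_sdiff.1 hAE).2
  rw [contract_indep_iff (hCC'.trans hC')]
  refine ⟨hAE.trans (sdiff_subset_sdiff subset_rfl hCC'), ?_⟩
  have hAC : A ∪ C ⊆ M.E := union_subset (hAE.trans sdiff_subset) (hCC'.trans hC')
  have hsub := M.r_submod hAC hC'
  have hunion : A ∪ C ∪ C' = A ∪ C' := by rw [union_assoc, union_eq_right.2 hCC']
  have hinter : (A ∪ C) ∩ C' = C := by
    rw [union_inter_distrib_right, disjoint_iff_inter_eq_empty.1 hAC', empty_union,
      inter_eq_left.2 hCC']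
  rw [hunion, hinter] at hsub
  have := r_union_le_card_add (hAE.trans sdiff_subset) (hCC'.trans hC')
  omega

theorem Indep.union_of_contract {X Y C : Finset α} (hX : (M.contract C).Indep X)
    (hY : (M.contract (X ∪ C)).Indep Y) (hC : C ⊆ M.E) : (M.contract C).Indep (X ∪ Y) := by
  obtain ⟨hXE, hXr⟩ := (contract_indep_iff hC).1 hX
  have hXC : X ∪ C ⊆ M.E := union_subset (hXE.trans sdiff_subset) hC
  obtain ⟨hYE, hYr⟩ := (contract_indep_iff hXC).1 hY
  have hXY : Disjoint X Y :=
    disjoint_of_subset_left subset_union_left (subset_sdiff.1 hYE).2.symm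
  rw [contract_indep_iff hC]
  refine ⟨union_subset hXE (hYE.trans (sdiff_subset_sdiff subset_rfl subset_union_right)), ?_⟩
  rw [card_union_of_disjoint hXY, union_comm X Y, union_assoc, hYr, hXr]
  ring

end FinMatroid

open FinMatroid

section FplusFminus

variable {α : Type*} [DecidableEq α] {m : ℕ} {M : FinMatroid α} {F : Fin m → Finset α}

theorem Fplus_empty : Fplus F ∅ = ∅ := rfl

theorem Fplus_singleton (i : Fin m) : Fplus F {i} = F i := sup_singleton

theorem Fplus_insert (j : Fin m) (σ : Finset (Fin m)) :
    Fplus F (insert j σ) = F j ∪ Fplus F σ := sup_insert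

theorem Fplus_subset (hF : ∀ i, F i ⊆ M.E) (σ : Finset (Fin m)) : Fplus F σ ⊆ M.E :=
  Finset.sup_le fun j _ => hF j

theorem Fminus_univ : Fminus M F univ = M.E :=
  filter_true_of_mem fun _ _ j hj => absurd (mem_univ j) hj

theorem Fminus_eq_Fminus_insert_inter {j : Fin m} {T : Finset (Fin m)} (hj : j ∉ T) :
    Fminus M F T = Fminus M F (insert j T) ∩ F j := by
  ext x
  simp only [Fminus, mem_filter, mem_inter, mem_insert, not_or]
  constructor
  · exact fun ⟨hx, hT⟩ => ⟨⟨hx, fun l hl => hT l hl.2⟩, hT j hj⟩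
  · rintro ⟨⟨hx, hT⟩, hxj⟩
    refine ⟨hx, fun l hl => ?_⟩
    by_cases hlj : l = j
    · exact hlj ▸ hxj
    · exact hT l ⟨hlj, hl⟩

theorem contract_indep_inter_Fminus_union_sdiff_Fplus (hF : ∀ i, F i ⊆ M.E) {I : Finset α}
    (hind : ∀ σ : Finset (Fin m),
      (M.contract (Fplus F σ)).Indep (I ∩ (Fminus M F σ \ Fplus F σ)))
    (D : Finset (Fin m)) :
    ∀ σ, Disjoint σ D →
      (M.contract (Fplus F σ)).Indep (I ∩ (Fminus M F (σ ∪ D) \ Fplus F σ)) := by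
  induction D using Finset.induction_on with
  | empty => simpa only [union_empty] using fun σ _ => hind σ
  | insert j D hjD ih =>
    intro σ hσ
    obtain ⟨hjσ, hσD⟩ := disjoint_insert_right.1 hσ
    have hX := ih σ hσD
    have hY := ih (insert j σ) (disjoint_insert_left.2 ⟨hjD, hσD⟩)
    rw [Fminus_eq_Fminus_insert_inter (notMem_union.2 ⟨hjσ, hjD⟩)] at hX
    rw [Fplus_insert, insert_union] at hY
    have hsplit : ∀ S C : Finset α,
        I ∩ (S \ C) = I ∩ ((S ∩ F j) \ C) ∪ I ∩ (S \ (F j ∪ C)) := by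
      intro S C
      ext x
      simp only [mem_union, mem_inter, mem_sdiff]
      tauto
    rw [union_insert, hsplit]
    exact hX.union_of_contract
      (hY.contract_of_subset (union_subset_union (inter_subset_right.trans
        (sdiff_subset.trans inter_subset_right)) subset_rfl)
        (union_subset (hF j) (Fplus_subset hF σ)))
      (Fplus_subset hF σ)

end FplusFminus

/-- If `I ∩ (F_σ⁻ \ F_σ⁺)` is independent in `M / F_σ⁺` for every `σ`,
then `I ∩ F i` is independent in `M | F i` and `I \ F i` is independent in `M / F i`
for each `i`. -/
theorem statement5 {α : Type*} [DecidableEq α] {m : ℕ} (M : FinMatroid α)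
    (F : Fin m → Finset α) (hF : ∀ i, F i ⊆ M.E)
    (I : Finset α) (hI : I ⊆ M.E)
    (hind : ∀ σ : Finset (Fin m),
      (M.contract (Fplus F σ)).Indep (I ∩ (Fminus M F σ \ Fplus F σ)))
    (i : Fin m) :
    (M.restrict (F i)).Indep (I ∩ F i) ∧ (M.contract (F i)).Indep (I \ F i) := by
  have hall : ∀ σ : Finset (Fin m), (M.contract (Fplus F σ)).Indep (I ∩ (M.E \ Fplus F σ)) :=
    fun σ => by
      simpa only [union_compl, Fminus_univ] using
        contract_indep_inter_Fminus_union_sdiff_Fplus hF hind σᶜ σ disjoint_compl_right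
  have hIndep : M.Indep I := by
    simpa only [Fplus_empty, sdiff_empty, inter_eq_left.2 hI, contract_empty_indep_iff]
      using hall ∅
  have hdiff : I ∩ (M.E \ F i) = I \ F i := by
    rw [← inter_sdiff_assoc, inter_eq_left.2 hI]
  refine ⟨hIndep.restrict_inter (F i), ?_⟩
  simpa only [Fplus_singleton, hdiff] using hall {i}
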